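/- For λ = 1, the unique fixed point of the on-policy per-agent operator R^i is the counterfactual value function EQ^i(s,a^{-i}) = E_{a^i~π^i}[Q^π(s, a^i, a^{-i})], where Q^π is the joint action-value function of the policy π. -/

import Mathlib

/-- One-step expectation operator of a Markov kernel `K` on the finite space `X`. -/
noncomputable def expK {X : Type*} [Fintype X] (K : X → X → ℝ) (h : X → ℝ) (x : X) : ℝ :=
  ∑ y, K x y * h y

/-- The joint action-value function `Q^π(s,a) = E_π[Σ_t γ^t r_t | (s₀,a₀) = (s,a)]`,
where `K` is the transition kernel of the chain `(s_t,a_t)` induced by the joint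
policy `π`. -/
noncomputable def Qpi {X : Type*} [Fintype X] (K : X → X → ℝ) (r : X → ℝ) (γ : ℝ)
    (x : X) : ℝ :=
  ∑' t : ℕ, γ ^ t * ((expK K)^[t] r) x

/-- The counterfactual per-agent value `EQ^i(s, a^{-i}) = E_{a^i ~ π^i}[Q^π(s, a^i, a^{-i})]`. -/
noncomputable def EQbar {S : Type*} {ι : Type*} [Fintype S] [Fintype ι] [DecidableEq ι]
    (A : ι → Type*) [∀ j, Fintype (A j)] (i : ι)
    (K : (S × ((j : ι) → A j)) → (S × ((j : ι) → A j)) → ℝ)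
    (r : (S × ((j : ι) → A j)) → ℝ) (pii : S → A i → ℝ) (γ : ℝ)
    (x : S × ((j : ι) → A j)) : ℝ :=
  ∑ b : A i, pii x.1 b * Qpi K r γ (x.1, Function.update x.2 i b)

/-- The on-policy per-agent value-iteration operator `R^i` (with parameter `λ`). -/
noncomputable def Rop {S : Type*} {ι : Type*} [Fintype S] [Fintype ι] [DecidableEq ι]
    (A : ι → Type*) [∀ j, Fintype (A j)] (i : ι)
    (K : (S × ((j : ι) → A j)) → (S × ((j : ι) → A j)) → ℝ)
    (r : (S × ((j : ι) → A j)) → ℝ) (pii : S → A i → ℝ) (γ lam : ℝ)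
    (f : (S × ((j : ι) → A j)) → ℝ) : (S × ((j : ι) → A j)) → ℝ :=
  fun x => f x + ∑ b : A i, pii x.1 b *
    ∑' t : ℕ, (γ * lam) ^ t *
      ((expK K)^[t] (fun y => r y + γ * expK K f y - f y)) (x.1, Function.update x.2 i b)

section Aux
variable {X : Type*} [Fintype X] {K : X → X → ℝ}

lemma expK_abs_le (hK0 : ∀ x y, 0 ≤ K x y) (hK1 : ∀ x, ∑ y, K x y = 1)
    {C : ℝ} {h : X → ℝ} (hh : ∀ y, |h y| ≤ C) (x : X) :
    |expK K h x| ≤ C := by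
  calc |expK K h x| ≤ ∑ y, |K x y * h y| := Finset.abs_sum_le_sum_abs _ _
    _ ≤ ∑ y, K x y * C := by
        apply Finset.sum_le_sum; intro y _
        rw [abs_mul, abs_of_nonneg (hK0 x y)]
        exact mul_le_mul_of_nonneg_left (hh y) (hK0 x y)
    _ = C := by rw [← Finset.sum_mul, hK1, one_mul]

lemma iter_abs_le (hK0 : ∀ x y, 0 ≤ K x y) (hK1 : ∀ x, ∑ y, K x y = 1)
    {C : ℝ} {h : X → ℝ} (hh : ∀ y, |h y| ≤ C) (t : ℕ) (x : X) :
    |((expK K)^[t] h) x| ≤ C := by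
  induction t generalizing x with
  | zero => simpa using hh x
  | succ n ih =>
    rw [Function.iterate_succ_apply']
    exact expK_abs_le hK0 hK1 ih x

lemma expK_comb (a b c : X → ℝ) (γ : ℝ) :
    expK K (fun y => a y + γ * b y - c y) =
      fun x => expK K a x + γ * expK K b x - expK K c x := by
  funext x
  simp only [expK, mul_add, mul_sub, mul_left_comm, Finset.sum_add_distrib,
    Finset.sum_sub_distrib, Finset.mul_sum]

lemma iter_expand (r f : X → ℝ) (γ : ℝ) (t : ℕ) :
    (expK K)^[t] (fun y => r y + γ * expK K f y - f y) =
      fun x => ((expK K)^[t] r) x + γ * ((expK K)^[t+1] f) x - ((expK K)^[t] f) x := by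
  induction t with
  | zero => simp
  | succ n ih =>
    rw [Function.iterate_succ_apply', ih, expK_comb]
    funext x
    simp [Function.iterate_succ_apply']

lemma summable_aux (hK0 : ∀ x y, 0 ≤ K x y) (hK1 : ∀ x, ∑ y, K x y = 1)
    (h : X → ℝ) {γ : ℝ} (hγ0 : 0 ≤ γ) (hγ1 : γ < 1) (x : X) :
    Summable (fun t : ℕ => γ ^ t * ((expK K)^[t] h) x) := by
  have : Nonempty X := ⟨x⟩
  set C := Finset.univ.sup' Finset.univ_nonempty (fun y => |h y|) with hCdef
  have hh : ∀ y, |h y| ≤ C := fun y => hCdef ▸ Finset.le_sup' (fun y => |h y|) (Finset.mem_univ y)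
  apply Summable.of_norm_bounded (g := fun t => γ ^ t * C)
    ((summable_geometric_of_lt_one hγ0 hγ1).mul_right C)
  intro t
  rw [Real.norm_eq_abs, abs_mul, abs_pow, abs_of_nonneg hγ0]
  exact mul_le_mul_of_nonneg_left (iter_abs_le hK0 hK1 hh t x) (pow_nonneg hγ0 t)

lemma tel (hK0 : ∀ x y, 0 ≤ K x y) (hK1 : ∀ x, ∑ y, K x y = 1)
    (f : X → ℝ) {γ : ℝ} (hγ0 : 0 ≤ γ) (hγ1 : γ < 1) (x : X) :
    ∑' t : ℕ, (γ ^ (t+1) * ((expK K)^[t+1] f) x - γ ^ t * ((expK K)^[t] f) x) = - f x := by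
  have : Nonempty X := ⟨x⟩
  set u : ℕ → ℝ := fun t => γ ^ t * ((expK K)^[t] f) x with hu
  have h0 : Summable u := summable_aux hK0 hK1 f hγ0 hγ1 x
  have h1 : Summable (fun t => u (t+1)) := (summable_nat_add_iff 1).2 h0
  have hs : Summable (fun t => u (t+1) - u t) := h1.sub h0
  have htsum : HasSum (fun t => u (t+1) - u t) (∑' t, (u (t+1) - u t)) := hs.hasSum
  have hpart : Filter.Tendsto (fun n => ∑ t ∈ Finset.range n, (u (t+1) - u t))
      Filter.atTop (nhds (∑' t, (u (t+1) - u t))) := htsum.tendsto_sum_nat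
  have hpart' : (fun n => ∑ t ∈ Finset.range n, (u (t+1) - u t)) = fun n => u n - u 0 := by
    funext n; exact Finset.sum_range_sub u n
  set C := Finset.univ.sup' Finset.univ_nonempty (fun y => |f y|) with hCdef
  have hh : ∀ y, |f y| ≤ C := fun y => hCdef ▸ Finset.le_sup' (fun y => |f y|) (Finset.mem_univ y)
  have hun : Filter.Tendsto u Filter.atTop (nhds 0) := by
    refine squeeze_zero_norm (a := fun n => γ ^ n * C) (fun n => ?_) ?_
    · rw [Real.norm_eq_abs, abs_mul, abs_pow, abs_of_nonneg hγ0]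
      exact mul_le_mul_of_nonneg_left (iter_abs_le hK0 hK1 hh n x) (pow_nonneg hγ0 n)
    · simpa using (tendsto_pow_atTop_nhds_zero_of_lt_one hγ0 hγ1 |>.mul_const C)
  have hlim : Filter.Tendsto (fun n => u n - u 0) Filter.atTop (nhds (0 - u 0)) :=
    hun.sub tendsto_const_nhds
  rw [hpart'] at hpart
  have := tendsto_nhds_unique hpart hlim
  simpa [hu] using this

lemma key (hK0 : ∀ x y, 0 ≤ K x y) (hK1 : ∀ x, ∑ y, K x y = 1)
    (r f : X → ℝ) {γ : ℝ} (hγ0 : 0 ≤ γ) (hγ1 : γ < 1) (x : X) :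
    ∑' t : ℕ, γ ^ t * ((expK K)^[t] (fun y => r y + γ * expK K f y - f y)) x
      = Qpi K r γ x - f x := by
  have h1 : Summable (fun t : ℕ => γ ^ t * ((expK K)^[t] r) x) :=
    summable_aux hK0 hK1 r hγ0 hγ1 x
  have h0 : Summable (fun t : ℕ => γ ^ t * ((expK K)^[t] f) x) :=
    summable_aux hK0 hK1 f hγ0 hγ1 x
  have h2 : Summable (fun t : ℕ =>
      γ ^ (t+1) * ((expK K)^[t+1] f) x - γ ^ t * ((expK K)^[t] f) x) :=
    (((summable_nat_add_iff 1).2 h0)).sub h0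
  have heq : (fun t : ℕ => γ ^ t * ((expK K)^[t] (fun y => r y + γ * expK K f y - f y)) x)
      = fun t => γ ^ t * ((expK K)^[t] r) x +
          (γ ^ (t+1) * ((expK K)^[t+1] f) x - γ ^ t * ((expK K)^[t] f) x) := by
    funext t
    rw [iter_expand]
    ring
  rw [heq, Summable.tsum_add h1 h2, tel hK0 hK1 f hγ0 hγ1 x, Qpi]
  ring

end Aux


/-- For `λ = 1`, the counterfactual value function
`EQ^i(s,a^{-i}) = E_{a^i ~ π^i}[Q^π(s,a^i,a^{-i})]` is a fixed point of the on-policy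
per-agent operator `R^i`, and it is the unique fixed point among functions of
`(s, a^{-i})`. -/
theorem EQbar_unique_fixedPoint_of_Rop {S : Type*} {ι : Type*} [Fintype S] [Fintype ι]
    [DecidableEq ι] (A : ι → Type*) [∀ j, Fintype (A j)] (i : ι)
    (K : (S × ((j : ι) → A j)) → (S × ((j : ι) → A j)) → ℝ)
    (hK0 : ∀ x y, 0 ≤ K x y) (hK1 : ∀ x, ∑ y, K x y = 1)
    (r : (S × ((j : ι) → A j)) → ℝ)
    (pii : S → A i → ℝ) (hpi0 : ∀ s b, 0 ≤ pii s b) (hpi1 : ∀ s, ∑ b, pii s b = 1)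
    (γ : ℝ) (hγ0 : 0 ≤ γ) (hγ1 : γ < 1) :
    Rop A i K r pii γ 1 (EQbar A i K r pii γ) = EQbar A i K r pii γ ∧
      ∀ f : (S × ((j : ι) → A j)) → ℝ,
        (∀ s (a b : (j : ι) → A j), (∀ j, j ≠ i → a j = b j) → f (s, a) = f (s, b)) →
        Rop A i K r pii γ 1 f = f → f = EQbar A i K r pii γ := by
  have key' : ∀ (f : (S × ((j : ι) → A j)) → ℝ) (x : S × ((j : ι) → A j)),
      Rop A i K r pii γ 1 f x =
        f x + ∑ b : A i, pii x.1 b * (Qpi K r γ (x.1, Function.update x.2 i b)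
          - f (x.1, Function.update x.2 i b)) := by
    intro f x
    unfold Rop
    simp only [mul_one]
    congr 1
    refine Finset.sum_congr rfl (fun b _ => ?_)
    rw [key hK0 hK1 r f hγ0 hγ1]
  constructor
  · funext x
    rw [key']
    have hEQ : ∀ b : A i,
        EQbar A i K r pii γ (x.1, Function.update x.2 i b) = EQbar A i K r pii γ x := by
      intro b
      unfold EQbar
      simp [Function.update_idem]
    have : ∑ b : A i, pii x.1 b * Qpi K r γ (x.1, Function.update x.2 i b)
        = EQbar A i K r pii γ x := rfl
    simp only [hEQ, mul_sub, Finset.sum_sub_distrib, this, ← Finset.sum_mul, hpi1, one_mul]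
    ring
  · intro f hind hfix
    funext x
    have hx := congrFun hfix x
    rw [key'] at hx
    have hfub : ∀ b : A i, f (x.1, Function.update x.2 i b) = f x := by
      intro b
      refine hind x.1 _ x.2 (fun j hj => ?_)
      exact Function.update_of_ne hj b x.2
    have hsum : ∑ b : A i, pii x.1 b * Qpi K r γ (x.1, Function.update x.2 i b) = f x := by
      simp only [hfub, mul_sub, Finset.sum_sub_distrib, ← Finset.sum_mul, hpi1, one_mul] at hx
      linarith
    unfold EQbar
    exact hsum.symm
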